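/- arXiv:math/0610020 — 2 statements merged into one kernel-verified Lean document; each statement's English description precedes it below -/
import Mathlib

section
/- For all integers m ≥ 2 and p ≥ 5 such that (m, p) is not of the form (2, p) with 5 ≤ p ≤ 12 and (m, p) ∉ {(3,5), (3,6)}, one has 1/d_1(m) − (p−2)(p+1)/(2 d_{p−1}(m)) > (p−2)(p−1)/(2 d_p(m)), where d_k(m) = (1/k) Σ_{d ∣ k} μ(d) m^{k/d}. -/
open ArithmeticFunction Finset

/-- `dWitt m k` is `(1/k) * ∑_{d ∣ k} μ(d) m^(k/d)`, the dimension of the space of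
Lie polynomials of degree `k` on `m` generators (Witt's formula), as a rational number. -/
noncomputable def dWitt (m k : ℕ) : ℚ :=
  (1 / (k : ℚ)) * ∑ d ∈ k.divisors, ((ArithmeticFunction.moebius d : ℤ) : ℚ) * (m : ℚ) ^ (k / d)

section aux

lemma dWitt.moe6 : (moebius 6 : ℤ) = 1 := by
  have := (ArithmeticFunction.isMultiplicative_moebius).map_mul_of_coprime
    (show Nat.Coprime 2 3 by norm_num)
  rw [show (6:ℕ) = 2*3 by norm_num, this,
    moebius_apply_prime (by norm_num : Nat.Prime 2),
    moebius_apply_prime (by norm_num : Nat.Prime 3)]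
  norm_num

lemma dWitt.nsf4 : ¬ Squarefree 4 := by
  intro h
  have := h 2 (by norm_num)
  rw [Nat.isUnit_iff] at this; omega

lemma dWitt.nsf12 : ¬ Squarefree 12 := by
  intro h
  have := h 2 (by norm_num)
  rw [Nat.isUnit_iff] at this; omega

lemma dWitt.moe_lb (d : ℕ) : -1 ≤ (moebius d : ℤ) := by
  by_cases h : Squarefree d
  · rw [moebius_apply_of_squarefree h]
    rcases neg_one_pow_eq_or ℤ (cardFactors d) with h' | h' <;> rw [h'] <;> norm_num
  · rw [ArithmeticFunction.moebius_eq_zero_of_not_squarefree h]; norm_num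

lemma dWitt.geo (M : ℤ) (hM : 2 ≤ M) : ∀ t, ∑ e ∈ range (t+1), M^e ≤ 2 * M^t := by
  intro t
  induction t with
  | zero => simp
  | succ t ih =>
    rw [Finset.sum_range_succ]
    have h1 : (2:ℤ) * M^t ≤ M * M^t := by
      have : (0:ℤ) ≤ M^t := by positivity
      nlinarith
    calc ∑ e ∈ range (t+1), M^e + M^(t+1) ≤ 2*M^t + M^(t+1) := by linarith
      _ ≤ M^(t+1) + M^(t+1) := by rw [pow_succ, mul_comm (M^t) M]; linarith
      _ = 2 * M^(t+1) := by ring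

lemma dWitt.key_int (m k : ℕ) (hm : 2 ≤ m) (hk : 3 ≤ k) :
    ((m:ℤ))^k ≤ 2 * ∑ d ∈ k.divisors, (moebius d : ℤ) * (m:ℤ)^(k/d) := by
  set M : ℤ := (m : ℤ) with hMdef
  have hM : 2 ≤ M := by rw [hMdef]; exact_mod_cast hm
  have hk0 : k ≠ 0 := by omega
  have h1mem : 1 ∈ k.divisors := Nat.one_mem_divisors.mpr hk0
  have hsplit : (moebius 1 : ℤ) * M^(k/1) + ∑ d ∈ k.divisors.erase 1, (moebius d : ℤ) * M^(k/d)
      = ∑ d ∈ k.divisors, (moebius d : ℤ) * M^(k/d) :=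
    Finset.add_sum_erase k.divisors (fun d => (moebius d : ℤ) * M^(k/d)) h1mem
  have htail : -(∑ d ∈ k.divisors.erase 1, M^(k/d))
      ≤ ∑ d ∈ k.divisors.erase 1, (moebius d : ℤ) * M^(k/d) := by
    rw [← Finset.sum_neg_distrib]
    apply Finset.sum_le_sum
    intro d _
    have h0 : (0:ℤ) ≤ M^(k/d) := by positivity
    nlinarith [dWitt.moe_lb d]
  have himg : ∑ d ∈ k.divisors.erase 1, M^(k/d) ≤ ∑ e ∈ range (k/2+1), M^e := by
    have hinj : Set.InjOn (fun d => k / d) (k.divisors.erase 1) := by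
      intro a ha b hb hab
      have ha' : a ∣ k := (Nat.mem_divisors.mp (Finset.mem_of_mem_erase ha)).1
      have hb' : b ∣ k := (Nat.mem_divisors.mp (Finset.mem_of_mem_erase hb)).1
      have e1 := Nat.div_div_self ha' hk0
      have e2 := Nat.div_div_self hb' hk0
      simp only at hab
      rw [← e1, ← e2, hab]
    rw [← Finset.sum_image hinj]
    apply Finset.sum_le_sum_of_subset_of_nonneg
    · intro e he
      rw [Finset.mem_image] at he
      obtain ⟨d, hd, rfl⟩ := he
      have hd2 : 2 ≤ d := by
        have h1 : d ≠ 1 := Finset.ne_of_mem_erase hd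
        have : d ≠ 0 := by
          intro h; rw [h] at hd
          exact absurd (Nat.mem_divisors.mp (Finset.mem_of_mem_erase hd)).1
            (by simpa using hk0)
        omega
      have : k / d ≤ k / 2 := Nat.div_le_div_left hd2 (by norm_num)
      rw [Finset.mem_range]; omega
    · intro e _ _; positivity
  have hgeo := dWitt.geo M hM (k/2)
  have hbig : 4 * M^(k/2) ≤ M^k := by
    have h2 : k/2 + 2 ≤ k := by omega
    calc 4 * M^(k/2) ≤ M^2 * M^(k/2) := by
          have h0 : (0:ℤ) ≤ M^(k/2) := by positivity
          have h4 : (4:ℤ) ≤ M^2 := by nlinarith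
          exact mul_le_mul_of_nonneg_right h4 h0
      _ = M^(k/2 + 2) := by ring
      _ ≤ M^k := pow_le_pow_right₀ (by omega) h2
  have hmu1 : (moebius 1 : ℤ) = 1 := by simp
  rw [← hsplit, hmu1]
  simp only [Nat.div_one]
  linarith

lemma dWitt.lb (m k : ℕ) (hm : 2 ≤ m) (hk : 3 ≤ k) :
    (m:ℚ)^k / (2*k) ≤ dWitt m k := by
  have hki := dWitt.key_int m k hm hk
  set S : ℤ := ∑ d ∈ k.divisors, (moebius d : ℤ) * (m:ℤ)^(k/d) with hS
  have hd : dWitt m k = (S : ℚ) / k := by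
    rw [dWitt, hS]
    push_cast
    ring
  rw [hd]
  have hk0 : (0:ℚ) < (k:ℚ) := by
    have : 0 < k := by omega
    exact_mod_cast this
  rw [div_le_div_iff₀ (by positivity) hk0]
  have hcast : ((m:ℚ))^k ≤ 2 * (S:ℚ) := by exact_mod_cast hki
  nlinarith [hk0]

lemma dWitt.one' (m : ℕ) : dWitt m 1 = m := by
  simp [dWitt, Nat.divisors_one]

lemma dWitt.keyStep (m q : ℕ) (hm : 2 ≤ m) (hq : 3 ≤ q)
    (h : q*(q+1)*((q+3)*m+(q+2)) < m^(q+1)) :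
    (q+1)*(q+2)*((q+4)*m+(q+3)) < m^(q+2) := by
  have h2 : (q+1)*(q+2)*((q+4)*m+(q+3)) ≤ 2*(q*(q+1)*((q+3)*m+(q+2))) := by
    obtain ⟨r, rfl⟩ := le_iff_exists_add.mp hq
    ring_nf
    nlinarith [Nat.zero_le (r*m), Nat.zero_le (r^2*m), Nat.zero_le (r^3*m),
      Nat.zero_le (r^2), Nat.zero_le (r^3), Nat.zero_le r, hm]
  have h3 : 2*m^(q+1) ≤ m^(q+2) := by
    have : m^(q+2) = m^(q+1) * m := by ring
    nlinarith [pow_pos (show 0 < m by omega) (q+1)]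
  omega

lemma dWitt.keyFrom (m q0 : ℕ) (hm : 2 ≤ m) (hq0 : 3 ≤ q0)
    (hbase : q0*(q0+1)*((q0+3)*m+(q0+2)) < m^(q0+1)) :
    ∀ q, q0 ≤ q → q*(q+1)*((q+3)*m+(q+2)) < m^(q+1) := by
  intro q hq
  induction q, hq using Nat.le_induction with
  | base => exact hbase
  | succ n hn ih =>
    have h := dWitt.keyStep m n hm (by omega) ih
    have e1 : n + 1 + 1 = n + 2 := by omega
    have e2 : n + 1 + 3 = n + 4 := by omega
    have e3 : n + 1 + 2 = n + 3 := by omega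
    rw [e1, e2, e3]
    exact h

lemma dWitt.keyP (m p q0 : ℕ) (hm : 2 ≤ m) (hq0 : 3 ≤ q0) (hq : q0 + 2 ≤ p)
    (hbase : q0*(q0+1)*((q0+3)*m+(q0+2)) < m^(q0+1)) :
    (p-2)*(p-1)*((p+1)*m+p) < m^(p-1) := by
  have h := dWitt.keyFrom m q0 hm hq0 hbase (p-2) (by omega)
  have e1 : p - 2 + 1 = p - 1 := by omega
  have e2 : p - 2 + 3 = p + 1 := by omega
  have e3 : p - 2 + 2 = p := by omega
  rw [e1, e2, e3] at h
  exact h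

lemma dWitt.main_gen (m p : ℕ) (hm : 2 ≤ m) (hp : 5 ≤ p)
    (hkey : (p-2)*(p-1)*((p+1)*m+p) < m^(p-1)) :
    1 / dWitt m 1 - ((p : ℚ) - 2) * ((p : ℚ) + 1) / (2 * dWitt m (p - 1)) >
      ((p : ℚ) - 2) * ((p : ℚ) - 1) / (2 * dWitt m p) := by
  have hm0 : (0:ℚ) < (m:ℚ) := by positivity
  have hq5 : (5:ℚ) ≤ (p:ℚ) := by exact_mod_cast hp
  set q : ℚ := (p:ℚ) with hqdef
  set u : ℚ := (m:ℚ)^(p-1) with hudef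
  have hu : 0 < u := by positivity
  have hcast1 : ((p-1 : ℕ) : ℚ) = q - 1 := by
    rw [hqdef]; push_cast [Nat.cast_sub (by omega : 1 ≤ p)]; ring
  have hA := dWitt.lb m (p-1) hm (by omega)
  have hB := dWitt.lb m p hm (by omega)
  rw [hcast1] at hA
  have hA0 : 0 < dWitt m (p-1) := lt_of_lt_of_le (div_pos hu (by linarith)) hA
  have hB0 : 0 < dWitt m p := lt_of_lt_of_le (by positivity) hB
  have hA' : u ≤ 2 * (q-1) * dWitt m (p-1) := by
    rw [div_le_iff₀ (by linarith : (0:ℚ) < 2*(q-1))] at hA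
    linarith [hA]
  have hB' : (m:ℚ)^p ≤ 2 * q * dWitt m p := by
    rw [div_le_iff₀ (by positivity)] at hB
    linarith [hB]
  have hpow : (m:ℚ)^p = u * (m:ℚ) := by
    rw [hudef, ← pow_succ]
    congr 1
    omega
  have hkeyQ : (q-2)*(q-1)*((q+1)*(m:ℚ)+q) < u := by
    have hc : (((p-2)*(p-1)*((p+1)*m+p) : ℕ) : ℚ) < ((m^(p-1) : ℕ) : ℚ) := by
      exact_mod_cast hkey
    push_cast [Nat.cast_sub (by omega : 2 ≤ p), Nat.cast_sub (by omega : 1 ≤ p)] at hc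
    rw [hudef, hqdef]
    convert hc using 2
  have e1 : (q-2)*(q+1)/(2*dWitt m (p-1)) ≤ (q-2)*(q+1)*(q-1)/u := by
    rw [div_le_div_iff₀ (by positivity) hu]
    nlinarith [mul_le_mul_of_nonneg_left hA' (show (0:ℚ) ≤ (q-2)*(q+1) by nlinarith)]
  have e2 : (q-2)*(q-1)/(2*dWitt m p) ≤ (q-2)*(q-1)*q/(m:ℚ)^p := by
    rw [div_le_div_iff₀ (by positivity) (by positivity)]
    nlinarith [mul_le_mul_of_nonneg_left hB' (show (0:ℚ) ≤ (q-2)*(q-1) by nlinarith)]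
  have e3 : (q-2)*(q+1)*(q-1)/u + (q-2)*(q-1)*q/(m:ℚ)^p < 1/(m:ℚ) := by
    rw [hpow, div_add_div _ _ (ne_of_gt hu) (by positivity), div_lt_div_iff₀ (by positivity) hm0]
    nlinarith [mul_lt_mul_of_pos_left hkeyQ (mul_pos hu hm0)]
  rw [dWitt.one']
  linarith [e1, e2, e3]

-- exceptional values

lemma dWitt.v2_12 : dWitt 2 12 = 335 := by
  have h : Nat.divisors 12 = {1,2,3,4,6,12} := by decide
  rw [dWitt, h]
  rw [Finset.sum_insert (by decide), Finset.sum_insert (by decide),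
    Finset.sum_insert (by decide), Finset.sum_insert (by decide),
    Finset.sum_insert (by decide), Finset.sum_singleton]
  rw [moebius_apply_prime (by norm_num : Nat.Prime 2),
    moebius_apply_prime (by norm_num : Nat.Prime 3),
    ArithmeticFunction.moebius_apply_one, dWitt.moe6,
    ArithmeticFunction.moebius_eq_zero_of_not_squarefree dWitt.nsf4,
    ArithmeticFunction.moebius_eq_zero_of_not_squarefree dWitt.nsf12]
  norm_num

lemma dWitt.v2_13 : dWitt 2 13 = 630 := by
  have h : Nat.divisors 13 = {1,13} := by decide
  rw [dWitt, h, Finset.sum_insert (by decide), Finset.sum_singleton,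
    ArithmeticFunction.moebius_apply_one, moebius_apply_prime (by norm_num : Nat.Prime 13)]
  norm_num

lemma dWitt.v3_6 : dWitt 3 6 = 116 := by
  have h : Nat.divisors 6 = {1,2,3,6} := by decide
  rw [dWitt, h, Finset.sum_insert (by decide), Finset.sum_insert (by decide),
    Finset.sum_insert (by decide), Finset.sum_singleton,
    ArithmeticFunction.moebius_apply_one, moebius_apply_prime (by norm_num : Nat.Prime 2),
    moebius_apply_prime (by norm_num : Nat.Prime 3), dWitt.moe6]
  norm_num

lemma dWitt.v3_7 : dWitt 3 7 = 312 := by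
  have h : Nat.divisors 7 = {1,7} := by decide
  rw [dWitt, h, Finset.sum_insert (by decide), Finset.sum_singleton,
    ArithmeticFunction.moebius_apply_one, moebius_apply_prime (by norm_num : Nat.Prime 7)]
  norm_num

lemma dWitt.v4_4 : dWitt 4 4 = 60 := by
  have h : Nat.divisors 4 = {1,2,4} := by decide
  rw [dWitt, h, Finset.sum_insert (by decide), Finset.sum_insert (by decide),
    Finset.sum_singleton,
    ArithmeticFunction.moebius_apply_one, moebius_apply_prime (by norm_num : Nat.Prime 2),
    ArithmeticFunction.moebius_eq_zero_of_not_squarefree dWitt.nsf4]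
  norm_num

lemma dWitt.v4_5 : dWitt 4 5 = 204 := by
  have h : Nat.divisors 5 = {1,5} := by decide
  rw [dWitt, h, Finset.sum_insert (by decide), Finset.sum_singleton,
    ArithmeticFunction.moebius_apply_one, moebius_apply_prime (by norm_num : Nat.Prime 5)]
  norm_num

end aux

theorem stmt_11 (m p : ℕ) (hm : 2 ≤ m) (hp : 5 ≤ p)
    (h₁ : ¬(m = 2 ∧ 5 ≤ p ∧ p ≤ 12)) (h₂ : (m, p) ≠ (3, 5)) (h₃ : (m, p) ≠ (3, 6)) :
    1 / dWitt m 1 - ((p : ℚ) - 2) * ((p : ℚ) + 1) / (2 * dWitt m (p - 1)) >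
      ((p : ℚ) - 2) * ((p : ℚ) - 1) / (2 * dWitt m p) := by
  rcases eq_or_ne m 2 with rfl | hm2
  · have hp13 : 13 ≤ p := by omega
    rcases eq_or_ne p 13 with rfl | hp13'
    · rw [dWitt.one', show (13:ℕ) - 1 = 12 from rfl, dWitt.v2_12, dWitt.v2_13]
      norm_num
    · exact dWitt.main_gen 2 p hm hp (dWitt.keyP 2 p 12 hm (by norm_num) (by omega) (by norm_num))
  rcases eq_or_ne m 3 with rfl | hm3
  · have hp7 : 7 ≤ p := by
      have h5 : p ≠ 5 := fun h => h₂ (by rw [h])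
      have h6 : p ≠ 6 := fun h => h₃ (by rw [h])
      omega
    rcases eq_or_ne p 7 with rfl | hp7'
    · rw [dWitt.one', show (7:ℕ) - 1 = 6 from rfl, dWitt.v3_6, dWitt.v3_7]
      norm_num
    · exact dWitt.main_gen 3 p hm hp (dWitt.keyP 3 p 6 hm (by norm_num) (by omega) (by norm_num))
  rcases eq_or_ne m 4 with rfl | hm4
  · rcases eq_or_ne p 5 with rfl | hp5'
    · rw [dWitt.one', show (5:ℕ) - 1 = 4 from rfl, dWitt.v4_4, dWitt.v4_5]
      norm_num
    · exact dWitt.main_gen 4 p hm hp (dWitt.keyP 4 p 4 hm (by norm_num) (by omega) (by norm_num))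
  · have hm5 : 5 ≤ m := by omega
    apply dWitt.main_gen m p hm hp
    apply dWitt.keyP m p 3 hm (by norm_num) (by omega)
    -- 3*4*(6*m+5) < m^4
    have h1 : 5^3 * m ≤ m^3 * m :=
      Nat.mul_le_mul_right m (Nat.pow_le_pow_left hm5 3)
    have h2 : m^(3+1) = m^3 * m := by ring
    nlinarith [hm5, h1, h2]
end

section
/- For all integers m ≥ 3 and p ≥ 5, one has 2·d_p(m) > (p−2)(p−1)·d_{⌊p/2⌋}(m), where d_k(m) = (1/k) Σ_{d ∣ k} μ(d) m^{k/d} and ⌊·⌋ denotes the floor function. -/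
open Finset ArithmeticFunction
open scoped ArithmeticFunction.Moebius

theorem Nat.le_div_two_of_mem_properDivisors {e n : ℕ} (h : e ∈ n.properDivisors) :
    e ≤ n / 2 := by
  obtain ⟨c, rfl⟩ := (Nat.mem_properDivisors.mp h).1
  have hc : 2 ≤ c := by
    have := Nat.one_lt_div_of_mem_properDivisors h
    rwa [Nat.mul_div_cancel_left _ (Nat.pos_of_mem_properDivisors h)] at this
  exact (Nat.le_div_iff_mul_le two_pos).mpr (Nat.mul_le_mul_left e hc)

theorem six_mul_sq_lt_three_pow {q : ℕ} (hq : 5 ≤ q) : 6 * q ^ 2 < 3 ^ q := by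
  induction q, hq using Nat.le_induction with
  | base => norm_num
  | succ n hn ih => rw [pow_succ' 3]; nlinarith

section Ordered

variable {K : Type*} [Field K] [LinearOrder K] [IsStrictOrderedRing K] {x : K}

theorem three_mul_pow_le_pow_succ (hx : 3 ≤ x) (n : ℕ) : 3 * x ^ n ≤ x ^ (n + 1) := by
  rw [pow_succ']; exact mul_le_mul_of_nonneg_right hx (pow_nonneg (by linarith) n)

theorem geom_sum_range_succ_le (hx : 3 ≤ x) (n : ℕ) :
    ∑ j ∈ range (n + 1), x ^ j ≤ 3 / 2 * x ^ n := by
  induction n with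
  | zero => norm_num
  | succ n ih =>
    rw [sum_range_succ]
    linarith [three_mul_pow_le_pow_succ hx n]

theorem witt_estimates_lt_of_lt_ten (hx : 3 ≤ x) {p : ℕ} (hp : 5 ≤ p) (hp10 : p < 10) :
    (p : K) * (p - 1) * (p - 2) * (x ^ (p / 2) + 3 / 2 * x ^ (p / 2 / 2)) <
      2 * (p / 2 : ℕ) * (x ^ p - 3 / 2 * x ^ (p / 2)) := by
  have h := three_mul_pow_le_pow_succ hx
  have := h 1; have := h 2; have := h 3; have := h 4; have := h 5; have := h 6; have := h 7
  have := h 8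
  interval_cases p <;> norm_num at * <;> linarith

theorem witt_estimates_lt_of_ten_le (hx : 3 ≤ x) {p : ℕ} (hp : 10 ≤ p) :
    (p : K) * (p - 1) * (p - 2) * (x ^ (p / 2) + 3 / 2 * x ^ (p / 2 / 2)) <
      2 * (p / 2 : ℕ) * (x ^ p - 3 / 2 * x ^ (p / 2)) := by
  set q := p / 2
  have hx1 : 1 ≤ x := by linarith
  have hq5 : (5 : K) ≤ q := by exact_mod_cast (by omega : 5 ≤ q)
  have hp2 : (2 : K) ≤ p := by exact_mod_cast (by omega : 2 ≤ p)
  have hpq : (p : K) ≤ 2 * q + 1 := by exact_mod_cast (by omega : p ≤ 2 * q + 1)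
  have hA : 6 * (q : K) ^ 2 < x ^ q := calc
    6 * (q : K) ^ 2 < 3 ^ q := by exact_mod_cast six_mul_sq_lt_three_pow (by omega)
    _ ≤ x ^ q := pow_le_pow_left₀ (by norm_num) hx q
  have hB : 3 * x ^ (q / 2) ≤ x ^ q :=
    (three_mul_pow_le_pow_succ hx _).trans (pow_le_pow_right₀ hx1 (by omega))
  have hsq : x ^ q * x ^ q ≤ x ^ p := by
    rw [← pow_add]; exact pow_le_pow_right₀ hx1 (by omega)
  have hcubic : (p : K) * (p - 1) * (p - 2) ≤ 2 * q * (4 * q ^ 2 - 1) := calc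
    (p : K) * (p - 1) * (p - 2) ≤ (2 * q + 1) * (2 * q + 1 - 1) * (2 * q + 1 - 2) := by
      gcongr <;> nlinarith
    _ = 2 * q * (4 * q ^ 2 - 1) := by ring
  have hcubic0 : 0 ≤ (p : K) * (p - 1) * (p - 2) :=
    mul_nonneg (mul_nonneg (by linarith) (by linarith)) (by linarith)
  have hxq : (0 : K) < x ^ q := by positivity
  calc (p : K) * (p - 1) * (p - 2) * (x ^ q + 3 / 2 * x ^ (q / 2))
      ≤ (p : K) * (p - 1) * (p - 2) * (3 / 2 * x ^ q) :=
        mul_le_mul_of_nonneg_left (by linarith) hcubic0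
    _ ≤ 2 * q * (4 * q ^ 2 - 1) * (3 / 2 * x ^ q) :=
        mul_le_mul_of_nonneg_right hcubic (by positivity)
    _ = 2 * q * (x ^ q * (6 * q ^ 2 - 3 / 2)) := by ring
    _ < 2 * q * (x ^ q * (x ^ q - 3 / 2)) :=
        mul_lt_mul_of_pos_left (mul_lt_mul_of_pos_left (by linarith) hxq) (by linarith)
    _ ≤ 2 * q * (x ^ p - 3 / 2 * x ^ q) := by gcongr; linarith

theorem witt_estimates_lt (hx : 3 ≤ x) {p : ℕ} (hp : 5 ≤ p) :
    (p : K) * (p - 1) * (p - 2) * (x ^ (p / 2) + 3 / 2 * x ^ (p / 2 / 2)) <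
      2 * (p / 2 : ℕ) * (x ^ p - 3 / 2 * x ^ (p / 2)) := by
  rcases lt_or_ge p 10 with hp10 | hp10
  · exact witt_estimates_lt_of_lt_ten hx hp hp10
  · exact witt_estimates_lt_of_ten_le hx hp10

end Ordered

theorem mul_dWitt_eq (m : ℕ) {k : ℕ} (hk : k ≠ 0) :
    k * dWitt m k = (m : ℚ) ^ k + ∑ e ∈ k.properDivisors, ((μ (k / e) : ℤ) : ℚ) * (m : ℚ) ^ e := by
  have hdiv : ∑ d ∈ k.divisors, ((μ d : ℤ) : ℚ) * (m : ℚ) ^ (k / d) =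
      ∑ e ∈ k.divisors, ((μ (k / e) : ℤ) : ℚ) * (m : ℚ) ^ e := by
    rw [← Nat.sum_div_divisors]
    refine sum_congr rfl fun d hd => ?_
    rw [Nat.div_div_self (Nat.dvd_of_mem_divisors hd) hk]
  rw [dWitt, ← mul_assoc, mul_one_div_cancel (Nat.cast_ne_zero.mpr hk), one_mul, hdiv,
    ← Nat.cons_self_properDivisors hk, sum_cons, Nat.div_self (Nat.pos_of_ne_zero hk),
    moebius_apply_one, Int.cast_one, one_mul]

theorem abs_mul_dWitt_sub_pow_le {m : ℕ} (hm : 3 ≤ m) (k : ℕ) :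
    |k * dWitt m k - (m : ℚ) ^ k| ≤ 3 / 2 * (m : ℚ) ^ (k / 2) := by
  rcases eq_or_ne k 0 with rfl | hk
  · norm_num
  have hm' : (3 : ℚ) ≤ m := by exact_mod_cast hm
  rw [mul_dWitt_eq m hk, add_sub_cancel_left]
  calc |∑ e ∈ k.properDivisors, ((μ (k / e) : ℤ) : ℚ) * (m : ℚ) ^ e|
      ≤ ∑ e ∈ k.properDivisors, (m : ℚ) ^ e := by
        refine (abs_sum_le_sum_abs _ _).trans (sum_le_sum fun e _ => ?_)
        rw [abs_mul, abs_of_nonneg (by positivity : (0 : ℚ) ≤ (m : ℚ) ^ e)]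
        exact mul_le_of_le_one_left (by positivity) (mod_cast abs_moebius_le_one)
    _ ≤ ∑ e ∈ range (k / 2 + 1), (m : ℚ) ^ e :=
        sum_le_sum_of_subset_of_nonneg
          (fun e he => mem_range_succ_iff.mpr (Nat.le_div_two_of_mem_properDivisors he))
          (fun _ _ _ => by positivity)
    _ ≤ 3 / 2 * (m : ℚ) ^ (k / 2) := geom_sum_range_succ_le hm' _

theorem stmt_12 (m p : ℕ) (hm : 3 ≤ m) (hp : 5 ≤ p) :
    2 * dWitt m p > ((p : ℚ) - 2) * ((p : ℚ) - 1) * dWitt m (p / 2) := by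
  have hdp := (abs_le.mp (abs_mul_dWitt_sub_pow_le hm p)).1
  have hdq := (abs_le.mp (abs_mul_dWitt_sub_pow_le hm (p / 2))).2
  have hkey := witt_estimates_lt (x := (m : ℚ)) (by exact_mod_cast hm) hp
  set q := p / 2
  have hp0 : (0 : ℚ) < p := by exact_mod_cast (by omega : 0 < p)
  have hq0 : (0 : ℚ) < q := by exact_mod_cast (by omega : 0 < q)
  have hp2 : (2 : ℚ) ≤ p := by exact_mod_cast (by omega : 2 ≤ p)
  refine lt_of_mul_lt_mul_left (?_ : (p * q : ℚ) * _ < _) (by positivity)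
  calc (p * q : ℚ) * (((p : ℚ) - 2) * ((p : ℚ) - 1) * dWitt m q)
      = (p : ℚ) * (p - 1) * (p - 2) * (q * dWitt m q) := by ring
    _ ≤ (p : ℚ) * (p - 1) * (p - 2) * ((m : ℚ) ^ q + 3 / 2 * (m : ℚ) ^ (q / 2)) :=
        mul_le_mul_of_nonneg_left (by linarith)
          (mul_nonneg (mul_nonneg (by linarith) (by linarith)) (by linarith))
    _ < 2 * q * ((m : ℚ) ^ p - 3 / 2 * (m : ℚ) ^ q) := hkey
    _ ≤ 2 * q * (p * dWitt m p) := mul_le_mul_of_nonneg_left (by linarith) (by positivity)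
    _ = (p * q : ℚ) * (2 * dWitt m p) := by ring
end
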